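/- arXiv:cond-mat/9704154 — 3 statements merged into one kernel-verified Lean document; each statement's English description precedes it below -/
import Mathlib

section
/- Let ζ ∈ (0,1), let r ∈ ℕ with r ≥ 1, let (a_n)_{n∈ℕ} be a summable sequence of nonnegative real numbers, and let B ⊆ ℂ be an open set with 0 ∉ B. Suppose there exists δ > 0 such that for all z ∈ B and all n ∈ ℕ one has |τ_z^{(n)}(1) − (−1/(ζz))| ≥ δ. Then the series F_r(z) = Σ_{n=0}^∞ a_n · (τ_z^{(n)}(1))^r converges for every z ∈ B and defines an analytic function of z on B. -/
/-- `h ζ w = ((ζ + w)/(1 + ζ w))^2`. -/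
noncomputable def hmap (ζ : ℝ) (w : ℂ) : ℂ := (((ζ : ℂ) + w) / (1 + (ζ : ℂ) * w)) ^ 2

/-- The `n`-th iterate `τ_z^{(n)}(1)` of `u ↦ h(z·u)` starting from `1`. -/
noncomputable def tauIter (ζ : ℝ) (z : ℂ) : ℕ → ℂ
  | 0 => 1
  | n + 1 => hmap ζ (z * tauIter ζ z n)

/-!
Writing `p = -1/(ζz)`, the denominator of the step `τ ↦ h(zτ)` is `1 + ζzτ = ζz(τ - p)`, so the
hypothesis keeps it at least `|ζ||z|δ` in modulus. Since
`(ζ + w)/(1 + ζw) = ζ⁻¹ + (ζ - ζ⁻¹)/(1 + ζw)`, the orbit `τ_z^{(n)}(1)` is then bounded uniformly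
in `n`, and locally uniformly in `z`, because `|z|` is locally bounded below on `B ∌ 0`.
Each `τ_z^{(n)}(1)` is holomorphic in `z`, so the Weierstrass M-test with majorant `|a_n| C^r` on
small balls gives both convergence and holomorphy of the sum.
-/

open Metric

section Orbit

variable {ζ : ℝ}

lemma one_add_mul_eq_mul_sub_pole (hζ : ζ ≠ 0) {z : ℂ} (hz : z ≠ 0) (τ : ℂ) :
    1 + ζ * (z * τ) = ζ * z * (τ - (-1 / ((ζ : ℂ) * z))) := by
  have hζ' : (ζ : ℂ) ≠ 0 := Complex.ofReal_ne_zero.2 hζ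
  field_simp
  ring

lemma hmap_eq (hζ : ζ ≠ 0) {w : ℂ} (hw : 1 + (ζ : ℂ) * w ≠ 0) :
    hmap ζ w = ((ζ : ℂ)⁻¹ + ((ζ : ℂ) - (ζ : ℂ)⁻¹) / (1 + ζ * w)) ^ 2 := by
  have hζ' : (ζ : ℂ) ≠ 0 := Complex.ofReal_ne_zero.2 hζ
  rw [hmap]
  congr 1
  field_simp
  ring

lemma norm_hmap_le (hζ : ζ ≠ 0) {w : ℂ} {m : ℝ} (hm : 0 < m) (hw : m ≤ ‖1 + (ζ : ℂ) * w‖) :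
    ‖hmap ζ w‖ ≤ (‖(ζ : ℂ)⁻¹‖ + ‖(ζ : ℂ) - (ζ : ℂ)⁻¹‖ / m) ^ 2 := by
  have hw0 : 1 + (ζ : ℂ) * w ≠ 0 := norm_pos_iff.1 (hm.trans_le hw)
  rw [hmap_eq hζ hw0, norm_pow]
  gcongr
  calc ‖(ζ : ℂ)⁻¹ + ((ζ : ℂ) - (ζ : ℂ)⁻¹) / (1 + ζ * w)‖
      ≤ ‖(ζ : ℂ)⁻¹‖ + ‖(ζ : ℂ) - (ζ : ℂ)⁻¹‖ / ‖1 + (ζ : ℂ) * w‖ := by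
        rw [← norm_div]
        exact norm_add_le _ _
    _ ≤ ‖(ζ : ℂ)⁻¹‖ + ‖(ζ : ℂ) - (ζ : ℂ)⁻¹‖ / m := by gcongr

lemma norm_tauIter_le (hζ : ζ ≠ 0) {z : ℂ} {c δ : ℝ} (hc : 0 < c) (hcz : c ≤ ‖z‖) (hδ : 0 < δ)
    (hpole : ∀ n, δ ≤ ‖tauIter ζ z n - (-1 / ((ζ : ℂ) * z))‖) (n : ℕ) :
    ‖tauIter ζ z n‖ ≤
      max 1 ((‖(ζ : ℂ)⁻¹‖ + ‖(ζ : ℂ) - (ζ : ℂ)⁻¹‖ / (‖(ζ : ℂ)‖ * c * δ)) ^ 2) := by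
  cases n with
  | zero => simp [tauIter]
  | succ n =>
    have hz : z ≠ 0 := norm_pos_iff.1 (hc.trans_le hcz)
    have hζ' : (ζ : ℂ) ≠ 0 := Complex.ofReal_ne_zero.2 hζ
    refine le_max_of_le_right (norm_hmap_le hζ (by positivity) ?_)
    rw [one_add_mul_eq_mul_sub_pole hζ hz, norm_mul, norm_mul]
    gcongr
    exact hpole n

lemma differentiableOn_tauIter (hζ : ζ ≠ 0) {B : Set ℂ} (hB0 : (0 : ℂ) ∉ B)
    (hpole : ∀ z ∈ B, ∀ n, tauIter ζ z n ≠ -1 / ((ζ : ℂ) * z)) (n : ℕ) :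
    DifferentiableOn ℂ (fun z => tauIter ζ z n) B := by
  induction n with
  | zero => exact differentiableOn_const 1
  | succ n ih =>
    have hden : ∀ z ∈ B, 1 + (ζ : ℂ) * (z * tauIter ζ z n) ≠ 0 := fun z hz => by
      have hz0 : z ≠ 0 := fun h => hB0 (h ▸ hz)
      rw [one_add_mul_eq_mul_sub_pole hζ hz0]
      exact mul_ne_zero (mul_ne_zero (Complex.ofReal_ne_zero.2 hζ) hz0)
        (sub_ne_zero.2 (hpole z hz n))
    have hmul : DifferentiableOn ℂ (fun z => z * tauIter ζ z n) B := differentiableOn_id.mul ih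
    exact (((differentiableOn_const _).add hmul).div
      ((differentiableOn_const _).mul hmul |>.const_add _) hden).pow 2

lemma exists_ball_norm_tauIter_le (hζ : ζ ≠ 0) {B : Set ℂ} (hB : IsOpen B) (hB0 : (0 : ℂ) ∉ B)
    {δ : ℝ} (hδ : 0 < δ) (hpole : ∀ z ∈ B, ∀ n, δ ≤ ‖tauIter ζ z n - (-1 / ((ζ : ℂ) * z))‖)
    {z₀ : ℂ} (hz₀ : z₀ ∈ B) :
    ∃ ε > 0, ball z₀ ε ⊆ B ∧ ∃ C, ∀ z ∈ ball z₀ ε, ∀ n, ‖tauIter ζ z n‖ ≤ C := by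
  obtain ⟨ε, hε, hεB⟩ := isOpen_iff.1 hB z₀ hz₀
  have hc : 0 < ‖z₀‖ / 2 := by
    have : z₀ ≠ 0 := fun h => hB0 (h ▸ hz₀)
    positivity
  refine ⟨min ε (‖z₀‖ / 2), lt_min hε hc, (ball_subset_ball (min_le_left _ _)).trans hεB,
    _, fun z hz => norm_tauIter_le hζ hc ?_ hδ (hpole z (hεB (ball_subset_ball
      (min_le_left _ _) hz)))⟩
  have hdist : ‖z₀ - z‖ < ‖z₀‖ / 2 :=
    (dist_eq_norm z₀ z ▸ mem_ball'.1 hz).trans_le (min_le_right _ _)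
  linarith [norm_sub_norm_le z₀ z]

end Orbit

lemma norm_ofReal_mul_pow_le {a C : ℝ} {x : ℂ} (hx : ‖x‖ ≤ C) (r : ℕ) :
    ‖(a : ℂ) * x ^ r‖ ≤ |a| * C ^ r := by
  rw [norm_mul, norm_pow, Complex.norm_real, Real.norm_eq_abs]
  gcongr

theorem stmt3_general (ζ : ℝ) (hζ0 : 0 < ζ) (r : ℕ)
    (a : ℕ → ℝ) (ha : Summable a)
    (B : Set ℂ) (hB : IsOpen B) (hB0 : (0 : ℂ) ∉ B)
    (hδ : ∃ δ : ℝ, 0 < δ ∧ ∀ z ∈ B, ∀ n : ℕ,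
      δ ≤ ‖tauIter ζ z n - (-1 / ((ζ : ℂ) * z))‖) :
    (∀ z ∈ B, Summable (fun n : ℕ => (a n : ℂ) * (tauIter ζ z n) ^ r)) ∧
    AnalyticOnNhd ℂ (fun z => ∑' n : ℕ, (a n : ℂ) * (tauIter ζ z n) ^ r) B := by
  obtain ⟨δ, hδ0, hpole⟩ := hδ
  have hbound := fun z₀ (hz₀ : z₀ ∈ B) =>
    exists_ball_norm_tauIter_le hζ0.ne' hB hB0 hδ0 hpole hz₀
  have hdiff : ∀ n, DifferentiableOn ℂ (fun z => tauIter ζ z n) B :=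
    differentiableOn_tauIter hζ0.ne' hB0 fun z hz n h => by
      simpa [h, hδ0.not_ge] using hpole z hz n
  refine ⟨fun z hz => ?_, DifferentiableOn.analyticOnNhd (fun z₀ hz₀ => ?_) hB⟩
  · obtain ⟨ε, hε, -, C, hC⟩ := hbound z hz
    exact (ha.abs.mul_right (C ^ r)).of_norm_bounded fun n =>
      norm_ofReal_mul_pow_le (hC z (mem_ball_self hε) n) r
  · obtain ⟨ε, hε, hεB, C, hC⟩ := hbound z₀ hz₀
    have hball : DifferentiableOn ℂ (fun z => ∑' n : ℕ, (a n : ℂ) * (tauIter ζ z n) ^ r)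
        (ball z₀ ε) :=
      Complex.differentiableOn_tsum_of_summable_norm (ha.abs.mul_right (C ^ r))
        (fun n => (differentiableOn_const _).mul (((hdiff n).mono hεB).pow r)) isOpen_ball
        fun n z hz => norm_ofReal_mul_pow_le (hC z hz n) r
    exact (hball.differentiableAt (isOpen_ball.mem_nhds (mem_ball_self hε))).differentiableWithinAt

/-- If the orbit `τ_z^{(n)}(1)` stays uniformly away from the pole `-1/(ζ z)` on an open
set `B` not containing `0`, then `F_r` converges and is analytic on `B`. -/
theorem stmt3 (ζ : ℝ) (hζ0 : 0 < ζ) (hζ1 : ζ < 1) (r : ℕ) (hr : 1 ≤ r)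
    (a : ℕ → ℝ) (ha : Summable a) (ha' : ∀ n, 0 ≤ a n)
    (B : Set ℂ) (hB : IsOpen B) (hB0 : (0 : ℂ) ∉ B)
    (hδ : ∃ δ : ℝ, 0 < δ ∧ ∀ z ∈ B, ∀ n : ℕ,
      δ ≤ ‖tauIter ζ z n - (-1 / ((ζ : ℂ) * z))‖) :
    (∀ z ∈ B, Summable (fun n : ℕ => (a n : ℂ) * (tauIter ζ z n) ^ r)) ∧
    AnalyticOnNhd ℂ (fun z => ∑' n : ℕ, (a n : ℂ) * (tauIter ζ z n) ^ r) B :=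
  stmt3_general ζ hζ0 r a ha B hB hB0 hδ
end

section
/- Let ζ ∈ (0,1) and n ∈ ℕ. For every z ∈ ℂ with |z| < 1 one has Q_n(z) ≠ 0 and τ_z^{(n)}(1) = P_n(z)/Q_n(z). -/
/-- The pair `(P_n, Q_n)` of polynomials defined by `P_0 = Q_0 = 1`,
`P_{n+1} = (ζ Q_n + X P_n)²`, `Q_{n+1} = (Q_n + ζ X P_n)²`. -/
noncomputable def PQ (ζ : ℝ) : ℕ → Polynomial ℂ × Polynomial ℂ
  | 0 => (1, 1)
  | n + 1 =>
    (((ζ : ℂ) • (PQ ζ n).2 + Polynomial.X * (PQ ζ n).1) ^ 2,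
     ((PQ ζ n).2 + (ζ : ℂ) • (Polynomial.X * (PQ ζ n).1)) ^ 2)

noncomputable def Ppoly (ζ : ℝ) (n : ℕ) : Polynomial ℂ := (PQ ζ n).1

noncomputable def Qpoly (ζ : ℝ) (n : ℕ) : Polynomial ℂ := (PQ ζ n).2

/-! The map `w ↦ (ζ + w)/(1 + ζ w)` is a Möbius automorphism of the unit disk, because
`|1 + ζ w|² - |ζ + w|² = (1 - ζ²)(1 - |w|²)`. Hence all iterates `τ_n` stay in the closed unit
disk, so `1 + ζ z τ_n` never vanishes, and substituting `τ_n = P_n/Q_n` into `h(z τ_n)` and clearing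
the denominator `Q_n` gives exactly the recursion for `(P_{n+1}, Q_{n+1})`. -/

open Complex ComplexConjugate

theorem normSq_one_add_conj_mul_sub_normSq_add (a w : ℂ) :
    normSq (1 + conj a * w) - normSq (a + w) = (1 - normSq a) * (1 - normSq w) := by
  simp only [normSq_apply, add_re, add_im, mul_re, mul_im, conj_re, conj_im, one_re, one_im]
  ring

theorem norm_add_lt_norm_one_add_conj_mul {a w : ℂ} (ha : ‖a‖ < 1) (hw : ‖w‖ < 1) :
    ‖a + w‖ < ‖1 + conj a * w‖ := by
  have hpos : 0 < (1 - normSq a) * (1 - normSq w) := by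
    rw [← Complex.sq_norm, ← Complex.sq_norm]
    exact mul_pos (by nlinarith [norm_nonneg a]) (by nlinarith [norm_nonneg w])
  rw [← normSq_one_add_conj_mul_sub_normSq_add, sub_pos, ← Complex.sq_norm,
    ← Complex.sq_norm] at hpos
  exact lt_of_pow_lt_pow_left₀ 2 (norm_nonneg _) hpos

theorem one_add_conj_mul_ne_zero {a w : ℂ} (ha : ‖a‖ < 1) (hw : ‖w‖ < 1) :
    1 + conj a * w ≠ 0 :=
  norm_pos_iff.mp ((norm_nonneg _).trans_lt (norm_add_lt_norm_one_add_conj_mul ha hw))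

theorem norm_add_div_one_add_conj_mul_lt_one {a w : ℂ} (ha : ‖a‖ < 1) (hw : ‖w‖ < 1) :
    ‖(a + w) / (1 + conj a * w)‖ < 1 := by
  rw [norm_div, div_lt_one (norm_pos_iff.mpr (one_add_conj_mul_ne_zero ha hw))]
  exact norm_add_lt_norm_one_add_conj_mul ha hw

theorem hmap_mul_div (ζ : ℝ) (z : ℂ) {p q : ℂ} (hq : q ≠ 0) :
    hmap ζ (z * (p / q)) = ((ζ * q + z * p) / (q + ζ * (z * p))) ^ 2 := by
  rw [hmap, ← mul_div_mul_left _ (1 + (ζ : ℂ) * (z * (p / q))) hq]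
  congr 2 <;> field_simp

theorem eval_Ppoly_succ (ζ : ℝ) (n : ℕ) (z : ℂ) :
    (Ppoly ζ (n + 1)).eval z = (ζ * (Qpoly ζ n).eval z + z * (Ppoly ζ n).eval z) ^ 2 := by
  simp [Ppoly, Qpoly, PQ]

theorem eval_Qpoly_succ (ζ : ℝ) (n : ℕ) (z : ℂ) :
    (Qpoly ζ (n + 1)).eval z = ((Qpoly ζ n).eval z + ζ * (z * (Ppoly ζ n).eval z)) ^ 2 := by
  simp [Ppoly, Qpoly, PQ]

section

variable {ζ : ℝ} {z w : ℂ}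

theorem one_add_ofReal_mul_ne_zero (hζ : |ζ| < 1) (hw : ‖w‖ < 1) : 1 + (ζ : ℂ) * w ≠ 0 := by
  simpa only [conj_ofReal] using
    one_add_conj_mul_ne_zero (a := ζ) (by rwa [norm_real, Real.norm_eq_abs]) hw

theorem norm_hmap_lt_one (hζ : |ζ| < 1) (hw : ‖w‖ < 1) : ‖hmap ζ w‖ < 1 := by
  have h := norm_add_div_one_add_conj_mul_lt_one (a := ζ)
    (by rwa [norm_real, Real.norm_eq_abs]) hw
  rw [conj_ofReal] at h
  rw [hmap, norm_pow]
  exact pow_lt_one₀ (norm_nonneg _) h two_ne_zero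

theorem norm_tauIter_le_one (hζ : |ζ| < 1) (hz : ‖z‖ < 1) (n : ℕ) :
    ‖tauIter ζ z n‖ ≤ 1 := by
  induction n with
  | zero => simp [tauIter]
  | succ n ih =>
    refine (norm_hmap_lt_one hζ ?_).le
    rw [norm_mul]
    exact (mul_le_of_le_one_right (norm_nonneg z) ih).trans_lt hz

theorem norm_mul_tauIter_lt_one (hζ : |ζ| < 1) (hz : ‖z‖ < 1) (n : ℕ) :
    ‖z * tauIter ζ z n‖ < 1 := by
  rw [norm_mul]
  exact (mul_le_of_le_one_right (norm_nonneg z) (norm_tauIter_le_one hζ hz n)).trans_lt hz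

theorem eval_Qpoly_ne_zero_and_tauIter_eq (hζ : |ζ| < 1) (hz : ‖z‖ < 1) (n : ℕ) :
    (Qpoly ζ n).eval z ≠ 0 ∧ tauIter ζ z n = (Ppoly ζ n).eval z / (Qpoly ζ n).eval z := by
  induction n with
  | zero => simp [Ppoly, Qpoly, PQ, tauIter]
  | succ n ih =>
    obtain ⟨hQ, hτ⟩ := ih
    -- `Q_n + ζ z P_n = Q_n (1 + ζ z τ_n)`, and the Möbius factor does not vanish on the disk.
    have hden : (Qpoly ζ n).eval z + ζ * (z * (Ppoly ζ n).eval z) ≠ 0 := by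
      have := mul_ne_zero hQ (one_add_ofReal_mul_ne_zero hζ (norm_mul_tauIter_lt_one hζ hz n))
      rwa [hτ, mul_add, mul_one, mul_left_comm, mul_left_comm _ z, mul_div_cancel₀ _ hQ] at this
    refine ⟨by rw [eval_Qpoly_succ]; exact pow_ne_zero 2 hden, ?_⟩
    rw [tauIter, hτ, hmap_mul_div ζ z hQ, eval_Ppoly_succ, eval_Qpoly_succ, div_pow]

end

/-- On the open unit disk, `Q_n(z) ≠ 0` and `τ_z^{(n)}(1) = P_n(z)/Q_n(z)`. -/
theorem stmt5 (ζ : ℝ) (hζ0 : 0 < ζ) (hζ1 : ζ < 1) (n : ℕ)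
    (z : ℂ) (hz : ‖z‖ < 1) :
    (Qpoly ζ n).eval z ≠ 0 ∧
    tauIter ζ z n = (Ppoly ζ n).eval z / (Qpoly ζ n).eval z :=
  eval_Qpoly_ne_zero_and_tauIter_eq (abs_lt.mpr ⟨by linarith, hζ1⟩) hz n
end

section
/- For every ζ ∈ (0, ζ₀) there exists f > 0 such that for every w ∈ ℂ with 1 < |w| < 1/√ζ + f one has |g(w)| < |w|². -/
/-!
On the circle `‖w‖ = r > 1` with `ζr < 1`, `|g|` is largest at `w = r`, where `g(r) = (r - ζ)/(1 - ζr)`,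
and `r²(1 - ζr) - (r - ζ) = -(r - 1)(ζr² + (ζ - 1)r + ζ)`. So `|g(w)| < |w|²` wherever the convex
quadratic `ζr² + (ζ - 1)r + ζ` is negative at `r = ‖w‖`. With `s = √ζ`, its value at `1/s` is
`(s³ + s² + s - 1)/s`, negative exactly when `s < s₀`; it is also negative at `1`, hence, by
continuity and convexity, on `[1, 1/s + f]` for some `f > 0`.
-/

/-- `g ζ w = (ζ − w)/(ζw − 1)`. -/
noncomputable def gmap (ζ : ℝ) (w : ℂ) : ℂ := ((ζ : ℂ) - w) / ((ζ : ℂ) * w - 1)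

lemma norm_ofReal_sub_sq (ζ : ℝ) (w : ℂ) :
    ‖(ζ : ℂ) - w‖ ^ 2 = ζ ^ 2 - 2 * ζ * w.re + ‖w‖ ^ 2 := by
  rw [Complex.sq_norm, Complex.sq_norm, Complex.normSq_apply, Complex.normSq_apply]
  simp only [Complex.sub_re, Complex.sub_im, Complex.ofReal_re, Complex.ofReal_im]
  ring

lemma norm_ofReal_mul_sub_one_sq (ζ : ℝ) (w : ℂ) :
    ‖(ζ : ℂ) * w - 1‖ ^ 2 = ζ ^ 2 * ‖w‖ ^ 2 - 2 * ζ * w.re + 1 := by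
  rw [Complex.sq_norm, Complex.sq_norm, Complex.normSq_apply, Complex.normSq_apply]
  simp only [Complex.sub_re, Complex.sub_im, Complex.mul_re, Complex.mul_im, Complex.ofReal_re,
    Complex.ofReal_im, Complex.one_re, Complex.one_im]
  ring

lemma norm_gmap_le {ζ : ℝ} {w : ℂ} (hζ : 0 ≤ ζ) (hw : 1 ≤ ‖w‖) (hζw : ζ * ‖w‖ < 1) :
    ‖gmap ζ w‖ ≤ (‖w‖ - ζ) / (1 - ζ * ‖w‖) := by
  have hx : w.re ≤ ‖w‖ := Complex.re_le_norm w
  have hζ1 : ζ < 1 := by nlinarith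
  have hden : 1 - ζ * ‖w‖ ≤ ‖(ζ : ℂ) * w - 1‖ := by
    simpa [norm_mul, norm_sub_rev, abs_of_nonneg hζ] using norm_sub_norm_le (1 : ℂ) (ζ * w)
  rw [gmap, norm_div, div_le_div_iff₀ (by linarith) (by linarith),
    ← pow_le_pow_iff_left₀ (by positivity) (mul_nonneg (by linarith) (norm_nonneg _)) two_ne_zero,
    mul_pow, mul_pow, norm_ofReal_sub_sq, norm_ofReal_mul_sub_one_sq]
  have : 0 ≤ 2 * ζ * (‖w‖ - w.re) * (‖w‖ ^ 2 - 1) * (1 - ζ ^ 2) := by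
    apply mul_nonneg (mul_nonneg (mul_nonneg _ _) _) <;> nlinarith
  linear_combination this

lemma mul_lt_one_of_quadratic_neg {ζ r : ℝ} (hr : 0 < r) (hq : ζ * r ^ 2 + (ζ - 1) * r + ζ < 0) :
    ζ * r < 1 := by
  nlinarith

lemma sub_div_lt_sq_of_quadratic_neg {ζ r : ℝ} (hr : 1 < r) (hζr : ζ * r < 1)
    (hq : ζ * r ^ 2 + (ζ - 1) * r + ζ < 0) : (r - ζ) / (1 - ζ * r) < r ^ 2 := by
  rw [div_lt_iff₀ (by linarith)]
  linear_combination mul_neg_of_pos_of_neg (sub_pos.2 hr) hq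

lemma norm_gmap_lt_sq_of_quadratic_neg {ζ : ℝ} {w : ℂ} (hζ : 0 ≤ ζ) (hw : 1 < ‖w‖)
    (hq : ζ * ‖w‖ ^ 2 + (ζ - 1) * ‖w‖ + ζ < 0) : ‖gmap ζ w‖ < ‖w‖ ^ 2 := by
  have hζw := mul_lt_one_of_quadratic_neg (by linarith) hq
  exact (norm_gmap_le hζ hw.le hζw).trans_lt (sub_div_lt_sq_of_quadratic_neg hw hζw hq)

lemma quadratic_neg_of_mem_Icc {a b c x y t : ℝ} (ha : 0 ≤ a) (hxt : x ≤ t) (hty : t ≤ y)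
    (hx : a * x ^ 2 + b * x + c < 0) (hy : a * y ^ 2 + b * y + c < 0) :
    a * t ^ 2 + b * t + c < 0 := by
  rcases hxt.eq_or_lt with rfl | hxt'
  · exact hx
  have hid : (y - x) * (a * t ^ 2 + b * t + c) = (y - t) * (a * x ^ 2 + b * x + c)
      + (t - x) * (a * y ^ 2 + b * y + c) - a * ((t - x) * (y - t) * (y - x)) := by ring
  have h1 : (y - t) * (a * x ^ 2 + b * x + c) ≤ 0 :=
    mul_nonpos_of_nonneg_of_nonpos (by linarith) hx.le
  have h2 : (t - x) * (a * y ^ 2 + b * y + c) < 0 := mul_neg_of_pos_of_neg (by linarith) hy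
  have h3 : 0 ≤ a * ((t - x) * (y - t) * (y - x)) := by
    apply mul_nonneg ha; apply mul_nonneg (mul_nonneg _ _) <;> linarith
  exact neg_of_mul_neg_right (by linarith) (by linarith : (0 : ℝ) ≤ y - x)

open Set in
theorem stmt15_general (s₀ : ℝ) (hs₀0 : 0 < s₀)
    (hs₀ : s₀ ^ 3 + s₀ ^ 2 + s₀ - 1 = 0)
    (ζ : ℝ) (hζ0 : 0 < ζ) (hζ : ζ < s₀ ^ 2) :
    ∃ f : ℝ, 0 < f ∧ ∀ w : ℂ, 1 < ‖w‖ →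
      ‖w‖ < 1 / Real.sqrt ζ + f →
      ‖gmap ζ w‖ < ‖w‖ ^ 2 := by
  set s := Real.sqrt ζ
  have hs : 0 < s := Real.sqrt_pos.2 hζ0
  have hsζ : s ^ 2 = ζ := Real.sq_sqrt hζ0.le
  have hcubic : s ^ 3 + s ^ 2 + s < 1 := by
    have : s < s₀ := (Real.sqrt_lt' hs₀0).2 hζ
    have : s ^ 3 + s ^ 2 + s < s₀ ^ 3 + s₀ ^ 2 + s₀ := by gcongr
    linarith
  have hq_one : ζ * 1 ^ 2 + (ζ - 1) * 1 + ζ < 0 := by nlinarith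
  have hq_inv : ζ * (1 / s) ^ 2 + (ζ - 1) * (1 / s) + ζ < 0 := by
    have : ζ * (1 / s) ^ 2 + (ζ - 1) * (1 / s) + ζ = (s ^ 3 + s ^ 2 + s - 1) / s := by
      rw [← hsζ]; field_simp; ring
    rw [this]
    exact div_neg_of_neg_of_pos (by linarith) hs
  obtain ⟨f, hqf, hf⟩ : ∃ f, ζ * (1 / s + f) ^ 2 + (ζ - 1) * (1 / s + f) + ζ < 0 ∧ 0 < f := by
    have hcont : Continuous fun t : ℝ => ζ * (1 / s + t) ^ 2 + (ζ - 1) * (1 / s + t) + ζ := by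
      fun_prop
    have hnear := (hcont.tendsto 0).eventually (gt_mem_nhds (by simpa using hq_inv))
    exact ((hnear.filter_mono nhdsWithin_le_nhds).and (self_mem_nhdsWithin (s := Ioi 0))).exists
  refine ⟨f, hf, fun w hw₁ hw₂ => norm_gmap_lt_sq_of_quadratic_neg hζ0.le hw₁ ?_⟩
  exact quadratic_neg_of_mem_Icc hζ0.le hw₁.le hw₂.le hq_one hqf

/-- For every `ζ ∈ (0, ζ₀)` (with `ζ₀ = s₀²`, `s₀` the real root of `s³ + s² + s − 1 = 0`
in `(0,1)`) there is `f > 0` such that `|g(w)| < |w|²` whenever `1 < |w| < 1/√ζ + f`. -/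
theorem stmt15 (s₀ : ℝ) (hs₀0 : 0 < s₀) (hs₀1 : s₀ < 1)
    (hs₀ : s₀ ^ 3 + s₀ ^ 2 + s₀ - 1 = 0)
    (ζ : ℝ) (hζ0 : 0 < ζ) (hζ : ζ < s₀ ^ 2) :
    ∃ f : ℝ, 0 < f ∧ ∀ w : ℂ, 1 < ‖w‖ →
      ‖w‖ < 1 / Real.sqrt ζ + f →
      ‖gmap ζ w‖ < ‖w‖ ^ 2 :=
  stmt15_general s₀ hs₀0 hs₀ ζ hζ0 hζ
end
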